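/- For every n ≥ 1, the graph B_n from Construction 2 is a connected n-vertex graph with no induced 6-cycles satisfying ι(B_n, P_3) = ⌊(n+1)/4⌋. -/
import Mathlib


open SimpleGraph

/-- The closed neighbourhood `N[D]` of a set `D` of vertices in a graph `G`. -/
def closedNbhd {V : Type*} (G : SimpleGraph V) (D : Set V) : Set V :=
  D ∪ {v | ∃ d ∈ D, G.Adj d v}

/-- `G` contains a (not necessarily induced) copy of `H`. -/
def ContainsCopy {α β : Type*} (G : SimpleGraph α) (H : SimpleGraph β) : Prop :=
  ∃ f : β ↪ α, ∀ a b, H.Adj a b → G.Adj (f a) (f b)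

/-- `D` is a `P₃`-isolating set of `G`: `G − N[D]` contains no 3-vertex path. -/
def IsP3IsolatingSet {V : Type*} (G : SimpleGraph V) (D : Set V) : Prop :=
  ¬ ContainsCopy (SimpleGraph.induce (closedNbhd G D)ᶜ G) (SimpleGraph.pathGraph 3)

/-- The `P₃`-isolation number of `G`. -/
noncomputable def iotaP3 {V : Type*} (G : SimpleGraph V) : ℕ :=
  sInf {m | ∃ D : Set V, IsP3IsolatingSet G D ∧ D.ncard = m}

/-- `G` has an induced 6-cycle. -/
def HasInducedC6 {V : Type*} (G : SimpleGraph V) : Prop :=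
  ∃ f : Fin 6 ↪ V, ∀ a b, G.Adj (f a) (f b) ↔ (SimpleGraph.cycleGraph 6).Adj a b

/-- Edge relation (on `ℕ`-labels) of the graph `B_k^*`: blocks `i < k-1` are copies of
`K₄⁻` on `4i, 4i+1, 4i+2, 4i+3` (as `vᵢ, vᵢ', wᵢ, wᵢ'`, with `wᵢwᵢ'` the non-edge),
the last block is a triangle `v_k, v_k', w_k` on `4(k-1), 4(k-1)+1, 4(k-1)+2`, and
consecutive blocks are joined by the edges `wᵢv_{i+1}` and `wᵢ'v_{i+1}'`. -/
def BstarRel (k : ℕ) (a b : ℕ) : Prop :=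
  (∃ i, i + 1 < k ∧
    ((a, b) = (4*i, 4*i+1) ∨ (a, b) = (4*i, 4*i+2) ∨ (a, b) = (4*i, 4*i+3) ∨
     (a, b) = (4*i+1, 4*i+2) ∨ (a, b) = (4*i+1, 4*i+3))) ∨
  ((a, b) = (4*(k-1), 4*(k-1)+1) ∨ (a, b) = (4*(k-1), 4*(k-1)+2) ∨
   (a, b) = (4*(k-1)+1, 4*(k-1)+2)) ∨
  (∃ i, i + 1 < k ∧ ((a, b) = (4*i+2, 4*(i+1)) ∨ (a, b) = (4*i+3, 4*(i+1)+1)))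

/-- The graph `B_k^*` on `4k-1` vertices. -/
def Bstar (k : ℕ) : SimpleGraph (Fin (4*k-1)) :=
  SimpleGraph.fromRel (fun a b => BstarRel k a.val b.val)

/-- Edge relation (on `ℕ`-labels) of the graph `B_n`: with `k = ⌊(n+1)/4⌋`, if `k = 0`
then `B_n` is the path on `n` vertices; otherwise it is `B_k^*` (on labels `0,…,4k-2`,
with `v₁ = 0`) together with a path on the remaining labels `4k-1,…,n-1` attached at
`v₁` (these are `r = n+1-4k` extra vertices, forming with `v₁` a path on `r+1` vertices). -/
def BnRel (n : ℕ) (a b : ℕ) : Prop :=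
  if (n + 1) / 4 = 0 then b = a + 1
  else BstarRel ((n + 1) / 4) a b ∨ (a = 0 ∧ b = 4 * ((n + 1) / 4) - 1) ∨
    (4 * ((n + 1) / 4) - 1 ≤ a ∧ b = a + 1)

/-- The graph `B_n` on `n` vertices. -/
def Bn (n : ℕ) : SimpleGraph (Fin n) :=
  SimpleGraph.fromRel (fun a b => BnRel n a.val b.val)

/-! ### auxiliary arithmetic adjacency -/

def adjN (a b : ℕ) : Prop :=
  (a / 4 = b / 4 ∧ a ≠ b ∧ ¬(a % 4 = 2 ∧ b % 4 = 3) ∧ ¬(a % 4 = 3 ∧ b % 4 = 2)) ∨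
  (b = a + 2 ∧ 2 ≤ a % 4) ∨ (a = b + 2 ∧ 2 ≤ b % 4)

lemma adjN_symm {a b : ℕ} (h : adjN a b) : adjN b a := by unfold adjN at *; omega

def AdjA (k a b : ℕ) : Prop :=
  a ≠ b ∧ ((a < 4*k-1 ∧ b < 4*k-1 ∧ adjN a b) ∨ (a = 0 ∧ b = 4*k-1) ∨
    (b = 0 ∧ a = 4*k-1) ∨ (4*k-1 ≤ a ∧ b = a+1) ∨ (4*k-1 ≤ b ∧ a = b+1))

lemma AdjA_symm {k a b : ℕ} (h : AdjA k a b) : AdjA k b a := by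
  obtain ⟨h1, h2⟩ := h
  refine ⟨h1.symm, ?_⟩
  rcases h2 with ⟨u, v, w⟩ | h | h | h | h
  · exact Or.inl ⟨v, u, adjN_symm w⟩
  · exact Or.inr (Or.inr (Or.inl h))
  · exact Or.inr (Or.inl h)
  · exact Or.inr (Or.inr (Or.inr (Or.inr h)))
  · exact Or.inr (Or.inr (Or.inr (Or.inl h)))

lemma bstar_or {k x y : ℕ} (hk : 1 ≤ k) :
    (BstarRel k x y ∨ BstarRel k y x) ↔ (x < 4*k-1 ∧ y < 4*k-1 ∧ adjN x y) := by
  constructor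
  · rintro (h | h) <;>
    · unfold BstarRel at h
      simp only [Prod.mk.injEq] at h
      unfold adjN
      rcases h with ⟨i, hi, h⟩ | h | ⟨i, hi, h⟩ <;> omega
  · rintro ⟨hx, hy, hadj⟩
    unfold adjN at hadj
    unfold BstarRel
    simp only [Prod.mk.injEq]
    rcases hadj with ⟨hq, hne, h23, h32⟩ | ⟨h2, hr⟩ | ⟨h2, hr⟩
    · by_cases hi : x / 4 + 1 < k
      · rcases Nat.lt_or_ge x y with hlt | hge
        · exact Or.inl (Or.inl ⟨x / 4, hi, by omega⟩)
        · exact Or.inr (Or.inl ⟨x / 4, by omega, by omega⟩)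
      · rcases Nat.lt_or_ge x y with hlt | hge
        · exact Or.inl (Or.inr (Or.inl (by omega)))
        · exact Or.inr (Or.inr (Or.inl (by omega)))
    · exact Or.inl (Or.inr (Or.inr ⟨x / 4, by omega, by omega⟩))
    · exact Or.inr (Or.inr (Or.inr ⟨y / 4, by omega, by omega⟩))

lemma bn_adj {n k : ℕ} (hk : (n + 1) / 4 = k) (hk1 : 1 ≤ k) (a b : Fin n) :
    (Bn n).Adj a b ↔ AdjA k a.val b.val := by
  have h0 : ¬ ((n + 1) / 4 = 0) := by omega
  rw [Bn, SimpleGraph.fromRel_adj]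
  unfold BnRel
  rw [hk, if_neg (by omega), if_neg (by omega)]
  constructor
  · rintro ⟨hne, h⟩
    refine ⟨fun hv => hne (Fin.ext hv), ?_⟩
    rcases h with (h | h | h) | (h | h | h)
    · exact Or.inl ((bstar_or hk1).mp (Or.inl h))
    · exact Or.inr (Or.inl h)
    · exact Or.inr (Or.inr (Or.inr (Or.inl h)))
    · obtain ⟨u, v, w⟩ := (bstar_or hk1).mp (Or.inl (h : BstarRel k b.val a.val))
      exact Or.inl ⟨v, u, adjN_symm w⟩
    · exact Or.inr (Or.inr (Or.inl h))
    · exact Or.inr (Or.inr (Or.inr (Or.inr h)))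
  · rintro ⟨hne, h⟩
    refine ⟨fun hv => hne (congrArg Fin.val hv), ?_⟩
    rcases h with h | h | h | h | h
    · rcases (bstar_or hk1).mpr h with h' | h'
      · exact Or.inl (Or.inl h')
      · exact Or.inr (Or.inl h')
    · exact Or.inl (Or.inr (Or.inl h))
    · exact Or.inr (Or.inr (Or.inl h))
    · exact Or.inl (Or.inr (Or.inr h))
    · exact Or.inr (Or.inr (Or.inr h))

/-! ### no induced C6: arithmetic core -/

set_option maxHeartbeats 3200000 in
lemma L (x0 x1 x2 x3 x4 x5 : ℕ)
    (a01 : adjN x0 x1) (a12 : adjN x1 x2) (a23 : adjN x2 x3) (a34 : adjN x3 x4)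
    (a45 : adjN x4 x5) (a50 : adjN x5 x0)
    (n02 : ¬adjN x0 x2) (n03 : ¬adjN x0 x3) (n04 : ¬adjN x0 x4) (n13 : ¬adjN x1 x3)
    (n14 : ¬adjN x1 x4) (n15 : ¬adjN x1 x5) (n24 : ¬adjN x2 x4) (n25 : ¬adjN x2 x5)
    (n35 : ¬adjN x3 x5)
    (d02 : x0 ≠ x2) (d03 : x0 ≠ x3) (d04 : x0 ≠ x4) (d13 : x1 ≠ x3) (d14 : x1 ≠ x4)
    (d15 : x1 ≠ x5) (d24 : x2 ≠ x4) (d25 : x2 ≠ x5) (d35 : x3 ≠ x5)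
    (hq : x0 / 4 + 1 = x1 / 4) : False := by
  have e1 : x1 = x0 + 2 ∧ 2 ≤ x0 % 4 := by
    unfold adjN at a01; omega
  by_cases c2 : x2/4 ≤ x0/4
  · have : x2 = x0 := by unfold adjN at a12; omega
    exact d02 this.symm
  · by_cases c3 : x3/4 ≤ x0/4
    · have f2 : x2 / 4 = x0/4 + 1 := by unfold adjN at a12; omega
      have f3 : x2 = x3 + 2 ∧ 2 ≤ x3 % 4 ∧ x3 / 4 = x0 / 4 := by
        unfold adjN at a23; omega
      have f4 : x4 = 4*(x0/4) ∨ x4 = 4*(x0/4) + 1 := by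
        unfold adjN at a34; omega
      unfold adjN at n04; omega
    · by_cases c4 : x4/4 ≤ x0/4
      · have g4 : x3 = x4 + 2 ∧ 2 ≤ x4 % 4 ∧ x4/4 = x0/4 := by
        
          unfold adjN at a34; omega
        unfold adjN at n13; omega
      · by_cases c5 : x5/4 ≤ x0/4
        · have h5 : x4 = x5 + 2 ∧ 2 ≤ x5 % 4 ∧ x5/4 = x0/4 := by
            unfold adjN at a45; omega
          unfold adjN at a50; omega
        · unfold adjN at a50; omega

set_option maxHeartbeats 3200000 in
lemma noC6core (x0 x1 x2 x3 x4 x5 : ℕ)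
    (a01 : adjN x0 x1) (a12 : adjN x1 x2) (a23 : adjN x2 x3) (a34 : adjN x3 x4)
    (a45 : adjN x4 x5) (a50 : adjN x5 x0)
    (n02 : ¬adjN x0 x2) (n03 : ¬adjN x0 x3) (n04 : ¬adjN x0 x4) (n13 : ¬adjN x1 x3)
    (n14 : ¬adjN x1 x4) (n15 : ¬adjN x1 x5) (n24 : ¬adjN x2 x4) (n25 : ¬adjN x2 x5)
    (n35 : ¬adjN x3 x5)
    (d02 : x0 ≠ x2) (d03 : x0 ≠ x3) (d04 : x0 ≠ x4) (d13 : x1 ≠ x3) (d14 : x1 ≠ x4)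
    (d15 : x1 ≠ x5) (d24 : x2 ≠ x4) (d25 : x2 ≠ x5) (d35 : x3 ≠ x5) : False := by
  have ns : ∀ {a b : ℕ}, ¬adjN a b → ¬adjN b a := fun h h' => h (adjN_symm h')
  by_cases h01 : x0/4 = x1/4
  case pos =>
    by_cases h12 : x1/4 = x2/4
    case pos =>
      by_cases h23 : x2/4 = x3/4
      case pos =>
        by_cases h34 : x3/4 = x4/4
        case pos =>
          by_cases h45 : x4/4 = x5/4
          case pos =>
            -- all same block
            have ne01 : x0 ≠ x1 := by unfold adjN at a01; omega
            have ne12 : x1 ≠ x2 := by unfold adjN at a12; omega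
            have ne23 : x2 ≠ x3 := by unfold adjN at a23; omega
            have ne34 : x3 ≠ x4 := by unfold adjN at a34; omega
            have ne45 : x4 ≠ x5 := by unfold adjN at a45; omega
            have ne50 : x5 ≠ x0 := by unfold adjN at a50; omega
            have b0 : x0 % 4 < 4 := by omega
            omega
          case neg =>
            have hd' : x4/4 + 1 = x5/4 ∨ x5/4 + 1 = x4/4 := by
              have h := a45; unfold adjN at h; omega
            rcases hd' with hd | hd
            · exact L x4 x5 x0 x1 x2 x3 a45 a50 a01 a12 a23 a34 (ns n04) (ns n14) (ns n24) (ns n15) (ns n25) (ns n35) n02 n03 n13 d04.symm d14.symm d24.symm d15.symm d25.symm d35.symm d02 d03 d13 hd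
            · exact L x5 x4 x3 x2 x1 x0 (adjN_symm a45) (adjN_symm a34) (adjN_symm a23) (adjN_symm a12) (adjN_symm a01) (adjN_symm a50) (ns n35) (ns n25) (ns n15) (ns n24) (ns n14) (ns n04) (ns n13) (ns n03) (ns n02) d35.symm d25.symm d15.symm d24.symm d14.symm d04.symm d13.symm d03.symm d02.symm hd
        case neg =>
          have hd' : x3/4 + 1 = x4/4 ∨ x4/4 + 1 = x3/4 := by
            have h := a34; unfold adjN at h; omega
          rcases hd' with hd | hd
          · exact L x3 x4 x5 x0 x1 x2 a34 a45 a50 a01 a12 a23 n35 (ns n03) (ns n13) (ns n04) (ns n14) (ns n24) (ns n15) (ns n25) n02 d35 d03.symm d13.symm d04.symm d14.symm d24.symm d15.symm d25.symm d02 hd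
          · exact L x4 x3 x2 x1 x0 x5 (adjN_symm a34) (adjN_symm a23) (adjN_symm a12) (adjN_symm a01) (adjN_symm a50) (adjN_symm a45) (ns n24) (ns n14) (ns n04) (ns n13) (ns n03) n35 (ns n02) n25 n15 d24.symm d14.symm d04.symm d13.symm d03.symm d35 d02.symm d25 d15 hd
      case neg =>
        have hd' : x2/4 + 1 = x3/4 ∨ x3/4 + 1 = x2/4 := by
          have h := a23; unfold adjN at h; omega
        rcases hd' with hd | hd
        · exact L x2 x3 x4 x5 x0 x1 a23 a34 a45 a50 a01 a12 n24 n25 (ns n02) n35 (ns n03) (ns n13) (ns n04) (ns n14) (ns n15) d24 d25 d02.symm d35 d03.symm d13.symm d04.symm d14.symm d15.symm hd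
        · exact L x3 x2 x1 x0 x5 x4 (adjN_symm a23) (adjN_symm a12) (adjN_symm a01) (adjN_symm a50) (adjN_symm a45) (adjN_symm a34) (ns n13) (ns n03) n35 (ns n02) n25 n24 n15 n14 n04 d13.symm d03.symm d35 d02.symm d25 d24 d15 d14 d04 hd
    case neg =>
      have hd' : x1/4 + 1 = x2/4 ∨ x2/4 + 1 = x1/4 := by
        have h := a12; unfold adjN at h; omega
      rcases hd' with hd | hd
      · exact L x1 x2 x3 x4 x5 x0 a12 a23 a34 a45 a50 a01 n13 n14 n15 n24 n25 (ns n02) n35 (ns n03) (ns n04) d13 d14 d15 d24 d25 d02.symm d35 d03.symm d04.symm hd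
      · exact L x2 x1 x0 x5 x4 x3 (adjN_symm a12) (adjN_symm a01) (adjN_symm a50) (adjN_symm a45) (adjN_symm a34) (adjN_symm a23) (ns n02) n25 n24 n15 n14 n13 n04 n03 (ns n35) d02.symm d25 d24 d15 d14 d13 d04 d03 d35.symm hd
  case neg =>
    have hd' : x0/4 + 1 = x1/4 ∨ x1/4 + 1 = x0/4 := by
      have h := a01; unfold adjN at h; omega
    rcases hd' with hd | hd
    · exact L x0 x1 x2 x3 x4 x5 a01 a12 a23 a34 a45 a50 n02 n03 n04 n13 n14 n15 n24 n25 n35 d02 d03 d04 d13 d14 d15 d24 d25 d35 hd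
    · exact L x1 x0 x5 x4 x3 x2 (adjN_symm a01) (adjN_symm a50) (adjN_symm a45) (adjN_symm a34) (adjN_symm a23) (adjN_symm a12) n15 n14 n13 n04 n03 n02 (ns n35) (ns n25) (ns n24) d15 d14 d13 d04 d03 d02 d35.symm d25.symm d24.symm hd

/-! ### connectivity -/

lemma bn_connected {n : ℕ} (hn : 1 ≤ n) : (Bn n).Connected := by
  set k := (n+1)/4 with hk
  have key : ∀ v : ℕ, ∀ a : Fin n, a.val = v → (Bn n).Reachable ⟨0, hn⟩ a := by
    intro v
    induction v using Nat.strong_induction_on with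
    | _ v ih =>
      intro a ha
      rcases Nat.eq_zero_or_pos v with h0 | hpos
      · have : a = ⟨0, hn⟩ := Fin.ext (by simp [ha, h0])
        rw [this]
      · by_cases hk0 : k = 0
        · -- path case
          have hvn : v - 1 < n := by omega
          have hadj : (Bn n).Adj ⟨v-1, hvn⟩ a := by
            rw [Bn, SimpleGraph.fromRel_adj]
            constructor
            · intro hcon
              have := congrArg Fin.val hcon
              simp only [ha] at this
              omega
            · left
              unfold BnRel
              rw [if_pos (by omega)]
              simp only [ha]; omega
          exact (ih (v-1) (by omega) _ rfl).trans hadj.reachable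
        · have hk1 : 1 ≤ k := by omega
          have hwin : 4*k - 1 ≤ n := by omega
          have step : ∀ p : ℕ, ∀ hpn : p < n, p < v → AdjA k p v →
              (Bn n).Reachable ⟨0, hn⟩ a := by
            intro p hpn hpv hadj
            have : (Bn n).Adj ⟨p, hpn⟩ a := by
              rw [bn_adj hk.symm hk1]
              simpa [ha] using hadj
            exact (ih p hpv _ rfl).trans this.reachable
          by_cases h1 : v = 4*k-1
          · exact step 0 (by omega) (by omega)
              ⟨by omega, Or.inr (Or.inl ⟨rfl, h1⟩)⟩
          · by_cases h2 : 4*k-1 < v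
            · exact step (v-1) (by omega) (by omega)
                ⟨by omega, Or.inr (Or.inr (Or.inr (Or.inl ⟨by omega, by omega⟩)))⟩
            · by_cases h3 : v % 4 = 0
              · exact step (v-2) (by omega) (by omega)
                  ⟨by omega, Or.inl ⟨by omega, by omega,
                    Or.inr (Or.inl ⟨by omega, by omega⟩)⟩⟩
              · exact step (4*(v/4)) (by omega) (by omega)
                  ⟨by omega, Or.inl ⟨by omega, by omega, Or.inl (by omega)⟩⟩
  have hne : Nonempty (Fin n) := ⟨⟨0, hn⟩⟩
  exact ⟨fun u w => ((key u.val u rfl).symm.trans (key w.val w rfl))⟩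

def domN (D : Finset ℕ) (S0 : Bool) (x : ℕ) : Prop :=
  (x = 0 ∧ S0 = true) ∨ x ∈ D ∨ ∃ d ∈ D, adjN d x

def IsoN (k : ℕ) (D : Finset ℕ) (S0 : Bool) : Prop :=
  ∀ a b c : ℕ, a ≤ 4*k-2 → b ≤ 4*k-2 → c ≤ 4*k-2 → a ≠ c →
    ¬ domN D S0 a → ¬ domN D S0 b → ¬ domN D S0 c → ¬(adjN b a ∧ adjN b c)

open Classical in
noncomputable def credit (D : Finset ℕ) (S0 : Bool) (j : ℕ) : ℕ :=
  if j = 0 then (if S0 = true then 1 else 0)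
  else if (4*j-2 ∈ D ∧ domN D S0 (4*j-1)) ∨ (4*j-1 ∈ D ∧ domN D S0 (4*j-2)) then 1 else 0

lemma credit_le_one (D : Finset ℕ) (S0 : Bool) (j : ℕ) : credit D S0 j ≤ 1 := by
  unfold credit; split_ifs <;> omega

lemma mem_dom {D : Finset ℕ} {S0 : Bool} {x : ℕ} (h : x ∈ D) : domN D S0 x :=
  Or.inr (Or.inl h)

lemma credit_mem {D : Finset ℕ} {S0 : Bool} {j : ℕ} (hj : j ≠ 0)
    (h : credit D S0 j ≠ 0) : 4*j-2 ∈ D ∨ 4*j-1 ∈ D := by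
  unfold credit at h
  rw [if_neg hj] at h
  by_cases hc : (4*j-2 ∈ D ∧ domN D S0 (4*j-1)) ∨ (4*j-1 ∈ D ∧ domN D S0 (4*j-2))
  · rcases hc with ⟨h1, _⟩ | ⟨h1, _⟩
    · exact Or.inl h1
    · exact Or.inr h1
  · rw [if_neg hc] at h; omega

lemma two_mem_card {u v : ℕ} {s : Finset ℕ} (hu : u ∈ s) (hv : v ∈ s) (h : u ≠ v) :
    2 ≤ s.card := Finset.one_lt_card.mpr ⟨u, hu, v, hv, h⟩

lemma three_mem_card {u v w : ℕ} {s : Finset ℕ} (hu : u ∈ s) (hv : v ∈ s) (hw : w ∈ s)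
    (h1 : u < v) (h2 : v < w) : 3 ≤ s.card := by
  have hsub : ({u, v, w} : Finset ℕ) ⊆ s := by
    intro x hx
    simp only [Finset.mem_insert, Finset.mem_singleton] at hx
    rcases hx with rfl | rfl | rfl <;> assumption
  have hcard : ({u, v, w} : Finset ℕ).card = 3 := by
    rw [Finset.card_insert_of_notMem (by simp; omega),
      Finset.card_insert_of_notMem (by simp; omega), Finset.card_singleton]
  calc 3 = ({u, v, w} : Finset ℕ).card := hcard.symm
    _ ≤ s.card := Finset.card_le_card hsub

lemma cnt_split (D : Finset ℕ) (j m : ℕ) (h : j ≤ m) :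
    (D.filter (fun x => 4*j ≤ x)).card =
    (D.filter (fun x => 4*j ≤ x ∧ x < 4*m)).card + (D.filter (fun x => 4*m ≤ x)).card := by
  rw [← Finset.card_union_of_disjoint]
  · congr 1
    ext x
    simp only [Finset.mem_union, Finset.mem_filter]
    constructor
    · rintro ⟨h1, h2⟩
      by_cases hx : x < 4*m
      · exact Or.inl ⟨h1, h2, hx⟩
      · exact Or.inr ⟨h1, by omega⟩
    · rintro (⟨h1, h2, _⟩ | ⟨h1, h2⟩)
      · exact ⟨h1, h2⟩
      · exact ⟨h1, by omega⟩
  · rw [Finset.disjoint_left]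
    intro x hx hx'
    simp only [Finset.mem_filter] at hx hx'
    omega

lemma chainLB (k : ℕ) (D : Finset ℕ) (S0 : Bool) (hk1 : 1 ≤ k)
    (hD : ∀ x ∈ D, x ≤ 4*k-2) (iso : IsoN k D S0) :
    ∀ t j, j + t + 1 = k → k - j ≤ (D.filter (fun x => 4*j ≤ x)).card + credit D S0 j := by
  intro t
  induction t using Nat.strong_induction_on with
  | _ t ih =>
  intro j hj
  rcases Nat.eq_zero_or_pos t with ht0 | htpos
  · -- BASE : j = k - 1, last block is a triangle
    subst ht0
    have hjk : j = k - 1 := by omega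
    rcases Nat.eq_zero_or_pos (credit D S0 j) with hcr | hcr
    swap
    · have := credit_le_one D S0 j; omega
    by_contra hcnt
    push_neg at hcnt
    have hc0 : (D.filter (fun x => 4*j ≤ x)).card = 0 := by omega
    have hT : ∀ x ∈ D, ¬ (4*j ≤ x) := by
      intro x hx hle
      have : x ∈ D.filter (fun x => 4*j ≤ x) := Finset.mem_filter.mpr ⟨hx, hle⟩
      rw [Finset.card_eq_zero] at hc0
      simp [hc0] at this
    have hm : ∀ c, 4*j ≤ c → c ∉ D := fun c hc hmem => hT c hmem hc
    by_cases hk2 : k = 1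
    · -- j = 0, triangle {0,1,2}
      have hj0 : j = 0 := by omega
      have hS0 : S0 ≠ true := by
        intro h
        unfold credit at hcr
        rw [if_pos hj0, if_pos h] at hcr
        omega
      have hDe : ∀ x, x ∉ D := fun x hx => hm x (by omega) hx
      have und : ∀ v : ℕ, ¬ domN D S0 v := by
        rintro v (⟨h0, hs⟩ | hmem | ⟨d, hd, _⟩)
        · exact hS0 hs
        · exact hDe v hmem
        · exact hDe d hd
      exact iso 0 1 2 (by omega) (by omega) (by omega) (by omega) (und 0) (und 1) (und 2)
        ⟨by unfold adjN; omega, by unfold adjN; omega⟩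
    · have hk2' : 2 ≤ k := by omega
      have hncr : ¬ ((4*k-6 ∈ D ∧ domN D S0 (4*k-5)) ∨ (4*k-5 ∈ D ∧ domN D S0 (4*k-6))) := by
        intro hcon
        unfold credit at hcr
        rw [if_neg (by omega : ¬ (j = 0))] at hcr
        have e1 : 4*j-2 = 4*k-6 := by omega
        have e2 : 4*j-1 = 4*k-5 := by omega
        rw [e1, e2, if_pos hcon] at hcr
        omega
      have und2 : ¬ domN D S0 (4*k-2) := by
        rintro (⟨h0, _⟩ | hmem | ⟨d, hd, hadj⟩)
        · omega
        · exact hm _ (by omega) hmem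
        · have hdle := hD d hd
          have : 4*j ≤ d := by unfold adjN at hadj; omega
          exact hm d this hd
      by_cases ha : 4*k-6 ∈ D
      · have hq : ¬ domN D S0 (4*k-5) := fun h => hncr (Or.inl ⟨ha, h⟩)
        have hb : 4*k-5 ∉ D := fun h => hq (mem_dom h)
        have und3 : ¬ domN D S0 (4*k-3) := by
          rintro (⟨h0, _⟩ | hmem | ⟨d, hd, hadj⟩)
          · omega
          · exact hm _ (by omega) hmem
          · have hdle := hD d hd
            have : d = 4*k-5 ∨ 4*j ≤ d := by unfold adjN at hadj; omega
            rcases this with rfl | hge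
            · exact hb hd
            · exact hm d hge hd
        exact iso (4*k-5) (4*k-3) (4*k-2) (by omega) (by omega) (by omega) (by omega)
          hq und3 und2 ⟨by unfold adjN; omega, by unfold adjN; omega⟩
      · by_cases hb : 4*k-5 ∈ D
        · have hp : ¬ domN D S0 (4*k-6) := fun h => hncr (Or.inr ⟨hb, h⟩)
          have und4 : ¬ domN D S0 (4*k-4) := by
            rintro (⟨h0, _⟩ | hmem | ⟨d, hd, hadj⟩)
            · omega
            · exact hm _ (by omega) hmem
            · have hdle := hD d hd
              have : d = 4*k-6 ∨ 4*j ≤ d := by unfold adjN at hadj; omega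
              rcases this with rfl | hge
              · exact ha hd
              · exact hm d hge hd
          exact iso (4*k-6) (4*k-4) (4*k-2) (by omega) (by omega) (by omega) (by omega)
            hp und4 und2 ⟨by unfold adjN; omega, by unfold adjN; omega⟩
        · have und4 : ¬ domN D S0 (4*k-4) := by
            rintro (⟨h0, _⟩ | hmem | ⟨d, hd, hadj⟩)
            · omega
            · exact hm _ (by omega) hmem
            · have hdle := hD d hd
              have : d = 4*k-6 ∨ 4*j ≤ d := by unfold adjN at hadj; omega
              rcases this with rfl | hge
              · exact ha hd
              · exact hm d hge hd
          have und3 : ¬ domN D S0 (4*k-3) := by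
            rintro (⟨h0, _⟩ | hmem | ⟨d, hd, hadj⟩)
            · omega
            · exact hm _ (by omega) hmem
            · have hdle := hD d hd
              have : d = 4*k-5 ∨ 4*j ≤ d := by unfold adjN at hadj; omega
              rcases this with rfl | hge
              · exact hb hd
              · exact hm d hge hd
          exact iso (4*k-4) (4*k-3) (4*k-2) (by omega) (by omega) (by omega) (by omega)
            und4 und3 und2 ⟨by unfold adjN; omega, by unfold adjN; omega⟩
  · -- STEP : j ≤ k-2
    obtain ⟨t', rfl⟩ : ∃ t', t = t' + 1 := ⟨t - 1, by omega⟩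
    have hjk2 : j + 2 ≤ k := by omega
    have hsplit := cnt_split D j (j+1) (by omega)
    have hcle1 := credit_le_one D S0 (j+1)
    have hcle0 := credit_le_one D S0 j
    have ih1 := ih t' (by omega) (j+1) (by omega)
    -- two-block helper
    have twob : ∀ u v : ℕ, u ∈ D → v ∈ D → 4*j ≤ u → u < v → v < 4*j+6 →
        k - j ≤ (D.filter (fun x => 4*j ≤ x)).card := by
      intro u v huD hvD hu huv hv6
      rcases Nat.eq_zero_or_pos t' with ht'0 | ht'pos
      · have h2c : 2 ≤ (D.filter (fun x => 4*j ≤ x)).card :=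
          two_mem_card (Finset.mem_filter.mpr ⟨huD, hu⟩)
            (Finset.mem_filter.mpr ⟨hvD, by omega⟩) (by omega)
        omega
      · have ih2 := ih (t'-1) (by omega) (j+2) (by omega)
        have hsplit2 := cnt_split D j (j+2) (by omega)
        have hcle2 := credit_le_one D S0 (j+2)
        by_cases hcc : credit D S0 (j+2) = 0
        · have h2c : 2 ≤ (D.filter (fun x => 4*j ≤ x ∧ x < 4*(j+2))).card :=
            two_mem_card (Finset.mem_filter.mpr ⟨huD, by omega⟩)
              (Finset.mem_filter.mpr ⟨hvD, by omega⟩) (by omega)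
          omega
        · have hcm := credit_mem (by omega : (j:ℕ)+2 ≠ 0) hcc
          have h3c : 3 ≤ (D.filter (fun x => 4*j ≤ x ∧ x < 4*(j+2))).card := by
            rcases hcm with hw | hw
            · exact three_mem_card (Finset.mem_filter.mpr ⟨huD, by omega⟩)
                (Finset.mem_filter.mpr ⟨hvD, by omega⟩)
                (Finset.mem_filter.mpr ⟨hw, by omega⟩) (by omega) (by omega)
            · exact three_mem_card (Finset.mem_filter.mpr ⟨huD, by omega⟩)
                (Finset.mem_filter.mpr ⟨hvD, by omega⟩)
                (Finset.mem_filter.mpr ⟨hw, by omega⟩) (by omega) (by omega)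
          omega
    by_cases h2 : 2 ≤ (D.filter (fun x => 4*j ≤ x ∧ x < 4*(j+1))).card
    · omega
    · by_cases hm2 : 4*j+2 ∈ D <;> by_cases hm3 : 4*j+3 ∈ D
      · exact absurd (two_mem_card (Finset.mem_filter.mpr ⟨hm2, by omega⟩)
          (Finset.mem_filter.mpr ⟨hm3, by omega⟩) (by omega)) h2
      · -- only 4j+2 among {2,3}
        have hm0 : 4*j ∉ D := fun h => h2 (two_mem_card
          (Finset.mem_filter.mpr ⟨h, by omega⟩) (Finset.mem_filter.mpr ⟨hm2, by omega⟩) (by omega))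
        have hm1 : 4*j+1 ∉ D := fun h => h2 (two_mem_card
          (Finset.mem_filter.mpr ⟨h, by omega⟩) (Finset.mem_filter.mpr ⟨hm2, by omega⟩) (by omega))
        by_cases hc5 : 4*j+5 ∈ D
        · exact le_trans (twob (4*j+2) (4*j+5) hm2 hc5 (by omega) (by omega) (by omega))
            (Nat.le_add_right _ _)
        · have hcz : credit D S0 (j+1) = 0 := by
            unfold credit
            rw [if_neg (by omega : ¬(j+1 = 0)), if_neg]
            have e1 : 4*(j+1)-2 = 4*j+2 := by omega
            have e2 : 4*(j+1)-1 = 4*j+3 := by omega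
            rw [e1, e2]
            rintro (⟨_, (⟨h0, _⟩ | hmem | ⟨d, hd, hadj⟩)⟩ | ⟨hmem3, _⟩)
            · omega
            · exact hm3 hmem
            · have : d = 4*j ∨ d = 4*j+1 ∨ d = 4*j+5 := by unfold adjN at hadj; omega
              rcases this with rfl | rfl | rfl
              exacts [hm0 hd, hm1 hd, hc5 hd]
            · exact hm3 hmem3
          have h1c : 1 ≤ (D.filter (fun x => 4*j ≤ x ∧ x < 4*(j+1))).card :=
            Finset.card_pos.mpr ⟨4*j+2, Finset.mem_filter.mpr ⟨hm2, by omega⟩⟩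
          omega
      · -- only 4j+3
        have hm0 : 4*j ∉ D := fun h => h2 (two_mem_card
          (Finset.mem_filter.mpr ⟨h, by omega⟩) (Finset.mem_filter.mpr ⟨hm3, by omega⟩) (by omega))
        have hm1 : 4*j+1 ∉ D := fun h => h2 (two_mem_card
          (Finset.mem_filter.mpr ⟨h, by omega⟩) (Finset.mem_filter.mpr ⟨hm3, by omega⟩) (by omega))
        by_cases hc4 : 4*j+4 ∈ D
        · exact le_trans (twob (4*j+3) (4*j+4) hm3 hc4 (by omega) (by omega) (by omega))
            (Nat.le_add_right _ _)
        · have hcz : credit D S0 (j+1) = 0 := by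
            unfold credit
            rw [if_neg (by omega : ¬(j+1 = 0)), if_neg]
            have e1 : 4*(j+1)-2 = 4*j+2 := by omega
            have e2 : 4*(j+1)-1 = 4*j+3 := by omega
            rw [e1, e2]
            rintro (⟨hmem2, _⟩ | ⟨_, (⟨h0, _⟩ | hmem | ⟨d, hd, hadj⟩)⟩)
            · exact hm2 hmem2
            · omega
            · exact hm2 hmem
            · have : d = 4*j ∨ d = 4*j+1 ∨ d = 4*j+4 := by unfold adjN at hadj; omega
              rcases this with rfl | rfl | rfl
              exacts [hm0 hd, hm1 hd, hc4 hd]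
          have h1c : 1 ≤ (D.filter (fun x => 4*j ≤ x ∧ x < 4*(j+1))).card :=
            Finset.card_pos.mpr ⟨4*j+3, Finset.mem_filter.mpr ⟨hm3, by omega⟩⟩
          omega
      · -- neither 4j+2 nor 4j+3 in D
        have hcz : credit D S0 (j+1) = 0 := by
          unfold credit
          rw [if_neg (by omega : ¬(j+1 = 0)), if_neg]
          have e1 : 4*(j+1)-2 = 4*j+2 := by omega
          have e2 : 4*(j+1)-1 = 4*j+3 := by omega
          rw [e1, e2]
          rintro (⟨hmem, _⟩ | ⟨hmem, _⟩)
          exacts [hm2 hmem, hm3 hmem]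
        by_cases hm0 : 4*j ∈ D
        · have h1c : 1 ≤ (D.filter (fun x => 4*j ≤ x ∧ x < 4*(j+1))).card :=
            Finset.card_pos.mpr ⟨4*j, Finset.mem_filter.mpr ⟨hm0, by omega⟩⟩
          omega
        · by_cases hm1 : 4*j+1 ∈ D
          · have h1c : 1 ≤ (D.filter (fun x => 4*j ≤ x ∧ x < 4*(j+1))).card :=
              Finset.card_pos.mpr ⟨4*j+1, Finset.mem_filter.mpr ⟨hm1, by omega⟩⟩
            omega
          · -- A empty
            by_cases hcj : credit D S0 j = 0
            · -- hard case: derive 4j+4, 4j+5 ∈ D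
              -- produce an undominated pair (other, center)
              have key : ∀ other center : ℕ, other ≤ 4*k-2 → other ≠ 4*j+2 → other ≠ 4*j+3 →
                  (center = 4*j ∨ center = 4*j+1) →
                  adjN center other →
                  ¬ domN D S0 other → ¬ domN D S0 center →
                  k - j ≤ (D.filter (fun x => 4*j ≤ x)).card + credit D S0 j := by
                intro other center hob hone2 hone3 hcen hadjco hundo hundc
                have hdom2 : domN D S0 (4*j+2) := by
                  by_contra hnd2
                  exact iso other center (4*j+2) hob (by omega) (by omega) hone2
                    hundo hundc hnd2 ⟨hadjco, by unfold adjN; omega⟩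
                have hdom3 : domN D S0 (4*j+3) := by
                  by_contra hnd3
                  exact iso other center (4*j+3) hob (by omega) (by omega) hone3
                    hundo hundc hnd3 ⟨hadjco, by unfold adjN; omega⟩
                have h4 : 4*j+4 ∈ D := by
                  rcases hdom2 with ⟨h0, _⟩ | hmem | ⟨d, hd, hadj⟩
                  · omega
                  · exact absurd hmem hm2
                  · have : d = 4*j ∨ d = 4*j+1 ∨ d = 4*j+4 := by unfold adjN at hadj; omega
                    rcases this with rfl | rfl | rfl
                    exacts [absurd hd hm0, absurd hd hm1, hd]
                have h5 : 4*j+5 ∈ D := by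
                  rcases hdom3 with ⟨h0, _⟩ | hmem | ⟨d, hd, hadj⟩
                  · omega
                  · exact absurd hmem hm3
                  · have : d = 4*j ∨ d = 4*j+1 ∨ d = 4*j+5 := by unfold adjN at hadj; omega
                    rcases this with rfl | rfl | rfl
                    exacts [absurd hd hm0, absurd hd hm1, hd]
                exact le_trans (twob (4*j+4) (4*j+5) h4 h5 (by omega) (by omega) (by omega))
                  (Nat.le_add_right _ _)
              by_cases hj0 : j = 0
              · have hS0 : S0 ≠ true := by
                  intro h
                  unfold credit at hcj
                  rw [if_pos hj0, if_pos h] at hcj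
                  omega
                have und0 : ¬ domN D S0 (4*j) := by
                  rintro (⟨h0, hs⟩ | hmem | ⟨d, hd, hadj⟩)
                  · exact hS0 hs
                  · exact hm0 hmem
                  · have : d = 4*j+1 ∨ d = 4*j+2 ∨ d = 4*j+3 := by
                      unfold adjN at hadj; omega
                    rcases this with rfl | rfl | rfl
                    exacts [hm1 hd, hm2 hd, hm3 hd]
                have und1 : ¬ domN D S0 (4*j+1) := by
                  rintro (⟨h0, _⟩ | hmem | ⟨d, hd, hadj⟩)
                  · omega
                  · exact hm1 hmem
                  · have : d = 4*j ∨ d = 4*j+2 ∨ d = 4*j+3 := by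
                      unfold adjN at hadj; omega
                    rcases this with rfl | rfl | rfl
                    exacts [hm0 hd, hm2 hd, hm3 hd]
                exact key (4*j+1) (4*j) (by omega) (by omega) (by omega) (Or.inl rfl)
                  (by unfold adjN; omega) und1 und0
              · have hncr : ¬ ((4*j-2 ∈ D ∧ domN D S0 (4*j-1)) ∨
                    (4*j-1 ∈ D ∧ domN D S0 (4*j-2))) := by
                  intro hcon
                  unfold credit at hcj
                  rw [if_neg hj0, if_pos hcon] at hcj
                  omega
                by_cases ha : 4*j-2 ∈ D
                · have hq : ¬ domN D S0 (4*j-1) := fun h => hncr (Or.inl ⟨ha, h⟩)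
                  have hbm : 4*j-1 ∉ D := fun h => hq (mem_dom h)
                  have und1 : ¬ domN D S0 (4*j+1) := by
                    rintro (⟨h0, _⟩ | hmem | ⟨d, hd, hadj⟩)
                    · omega
                    · exact hm1 hmem
                    · have : d = 4*j-1 ∨ d = 4*j ∨ d = 4*j+2 ∨ d = 4*j+3 := by
                        unfold adjN at hadj; omega
                      rcases this with rfl | rfl | rfl | rfl
                      exacts [hbm hd, hm0 hd, hm2 hd, hm3 hd]
                  exact key (4*j-1) (4*j+1) (by omega) (by omega) (by omega) (Or.inr rfl)
                    (by unfold adjN; omega) hq und1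
                · by_cases hb : 4*j-1 ∈ D
                  · have hp : ¬ domN D S0 (4*j-2) := fun h => hncr (Or.inr ⟨hb, h⟩)
                    have und0 : ¬ domN D S0 (4*j) := by
                      rintro (⟨h0, _⟩ | hmem | ⟨d, hd, hadj⟩)
                      · omega
                      · exact hm0 hmem
                      · have : d = 4*j-2 ∨ d = 4*j+1 ∨ d = 4*j+2 ∨ d = 4*j+3 := by
                          unfold adjN at hadj; omega
                        rcases this with rfl | rfl | rfl | rfl
                        exacts [ha hd, hm1 hd, hm2 hd, hm3 hd]
                    exact key (4*j-2) (4*j) (by omega) (by omega) (by omega) (Or.inl rfl)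
                      (by unfold adjN; omega) hp und0
                  · have und0 : ¬ domN D S0 (4*j) := by
                      rintro (⟨h0, _⟩ | hmem | ⟨d, hd, hadj⟩)
                      · omega
                      · exact hm0 hmem
                      · have : d = 4*j-2 ∨ d = 4*j+1 ∨ d = 4*j+2 ∨ d = 4*j+3 := by
                          unfold adjN at hadj; omega
                        rcases this with rfl | rfl | rfl | rfl
                        exacts [ha hd, hm1 hd, hm2 hd, hm3 hd]
                    have und1 : ¬ domN D S0 (4*j+1) := by
                      rintro (⟨h0, _⟩ | hmem | ⟨d, hd, hadj⟩)
                      · omega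
                      · exact hm1 hmem
                      · have : d = 4*j-1 ∨ d = 4*j ∨ d = 4*j+2 ∨ d = 4*j+3 := by
                          unfold adjN at hadj; omega
                        rcases this with rfl | rfl | rfl | rfl
                        exacts [hb hd, hm0 hd, hm2 hd, hm3 hd]
                    exact key (4*j+1) (4*j) (by omega) (by omega) (by omega) (Or.inl rfl)
                      (by unfold adjN; omega) und1 und0
            · omega

lemma bn_noC6 {n : ℕ} (hn : 1 ≤ n) : ¬ HasInducedC6 (Bn n) := by
  rintro ⟨f, hf⟩
  set k := (n+1)/4 with hk
  have hD : ∀ i j : Fin 6, i ≠ j → (f i).val ≠ (f j).val :=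
    fun i j h hv => h (f.injective (Fin.ext hv))
  by_cases hk0 : k = 0
  · have hn2 : n ≤ 2 := by omega
    have b0 : (f 0).val < n := (f 0).isLt
    have b1 : (f 1).val < n := (f 1).isLt
    have b2 : (f 2).val < n := (f 2).isLt
    have d01 := hD 0 1 (by decide)
    have d02 := hD 0 2 (by decide)
    have d12 := hD 1 2 (by decide)
    omega
  · have hk1 : 1 ≤ k := by omega
    have hA : ∀ i j : Fin 6, (cycleGraph 6).Adj i j → AdjA k (f i).val (f j).val :=
      fun i j h => (bn_adj hk.symm hk1 _ _).mp ((hf i j).mpr h)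
    have hN : ∀ i j : Fin 6, ¬(cycleGraph 6).Adj i j → ¬ AdjA k (f i).val (f j).val :=
      fun i j h hc => h ((hf i j).mp ((bn_adj hk.symm hk1 _ _).mpr hc))
    obtain ⟨i0, -, hmax⟩ := Finset.exists_max_image (Finset.univ : Finset (Fin 6))
      (fun i => (f i).val) ⟨0, Finset.mem_univ 0⟩
    have hbig : ∀ l : Fin 6, (f l).val < 4*k-1 := by
      intro l; by_contra hcon; push_neg at hcon
      have hi0 : 4*k-1 ≤ (f i0).val := le_trans hcon (hmax l (Finset.mem_univ _))
      have tl : ∀ j : Fin 6, (cycleGraph 6).Adj i0 j →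
          ((f i0).val = 4*k-1 ∧ (f j).val = 0) ∨
          ((f i0).val = (f j).val + 1 ∧ 4*k-1 ≤ (f j).val) := by
        intro j hj
        have h1 := hA i0 j hj
        have h2 := hmax j (Finset.mem_univ _)
        unfold AdjA adjN at h1
        omega
      have hadj1 : ∀ m : Fin 6, (cycleGraph 6).Adj m (m+1) := by decide
      have hadj2 : ∀ m : Fin 6, (cycleGraph 6).Adj m (m+5) := by decide
      have hne12 : ∀ m : Fin 6, m + 1 ≠ m + 5 := by decide
      have t1 := tl (i0+1) (hadj1 i0)
      have t2 := tl (i0+5) (hadj2 i0)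
      have hd := hD (i0+1) (i0+5) (hne12 i0)
      omega
    have hA' : ∀ i j : Fin 6, (cycleGraph 6).Adj i j → adjN (f i).val (f j).val := by
      intro i j h
      obtain ⟨hne, hcl⟩ := hA i j h
      have b1 := hbig i; have b2 := hbig j
      rcases hcl with ⟨_, _, h'⟩ | h' | h' | h' | h'
      · exact h'
      all_goals exact absurd h' (by omega)
    have hN' : ∀ i j : Fin 6, ¬(cycleGraph 6).Adj i j → i ≠ j →
        ¬ adjN (f i).val (f j).val := by
      intro i j h hij hadj
      exact hN i j h ⟨hD i j hij, Or.inl ⟨hbig i, hbig j, hadj⟩⟩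
    exact noC6core (f 0).val (f 1).val (f 2).val (f 3).val (f 4).val (f 5).val
      (hA' 0 1 (by decide)) (hA' 1 2 (by decide)) (hA' 2 3 (by decide))
      (hA' 3 4 (by decide)) (hA' 4 5 (by decide)) (hA' 5 0 (by decide))
      (hN' 0 2 (by decide) (by decide)) (hN' 0 3 (by decide) (by decide))
      (hN' 0 4 (by decide) (by decide)) (hN' 1 3 (by decide) (by decide))
      (hN' 1 4 (by decide) (by decide)) (hN' 1 5 (by decide) (by decide))
      (hN' 2 4 (by decide) (by decide)) (hN' 2 5 (by decide) (by decide))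
      (hN' 3 5 (by decide) (by decide))
      (hD 0 2 (by decide)) (hD 0 3 (by decide)) (hD 0 4 (by decide))
      (hD 1 3 (by decide)) (hD 1 4 (by decide)) (hD 1 5 (by decide))
      (hD 2 4 (by decide)) (hD 2 5 (by decide)) (hD 3 5 (by decide))

lemma mem_closedNbhd {V : Type*} {G : SimpleGraph V} {D : Set V} {x : V} :
    x ∈ closedNbhd G D ↔ x ∈ D ∨ ∃ d ∈ D, G.Adj d x := Iff.rfl

/-- smallness criterion for isolation -/
lemma small_compl {n : ℕ} {D : Set (Fin n)} {lo : ℕ}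
    (h : ∀ v : Fin n, v ∉ closedNbhd (Bn n) D → lo ≤ v.val) (hn : n ≤ lo + 2) :
    IsP3IsolatingSet (Bn n) D := by
  rintro ⟨f, -⟩
  have hb : ∀ i : Fin 3, lo ≤ ((f i) : Fin n).val := fun i => h _ (f i).2
  have hlt : ∀ i : Fin 3, ((f i) : Fin n).val < n := fun i => ((f i) : Fin n).isLt
  have hd : ∀ i j : Fin 3, i ≠ j → ((f i) : Fin n).val ≠ ((f j) : Fin n).val :=
    fun i j hij hv => hij (f.injective (Subtype.ext (Fin.ext hv)))
  have h01 := hd 0 1 (by decide)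
  have h02 := hd 0 2 (by decide)
  have h12 := hd 1 2 (by decide)
  have b0 := hb 0; have b1 := hb 1; have b2 := hb 2
  have l0 := hlt 0; have l1 := hlt 1; have l2 := hlt 2
  omega

/-- upper bound witness -/
lemma ub_witness {n k : ℕ} (hk : (n+1)/4 = k) (hn : 1 ≤ n) :
    ∃ D : Set (Fin n), IsP3IsolatingSet (Bn n) D ∧ D.ncard = k := by
  by_cases hk0 : k = 0
  · refine ⟨∅, small_compl (lo := 0) (fun v _ => Nat.zero_le _) (by omega), by simp [hk0]⟩
  · have hk1 : 1 ≤ k := by omega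
    have hnk : 4*k - 1 ≤ n := by omega
    classical
    set Dfin : Finset (Fin n) :=
      Finset.univ.filter (fun v => v.val % 4 = 0 ∧ v.val < 4*k-1) with hDfin
    have hmemD : ∀ v : Fin n, v ∈ Dfin ↔ (v.val % 4 = 0 ∧ v.val < 4*k-1) := by
      intro v; simp [hDfin]
    refine ⟨(Dfin : Set (Fin n)), ?_, ?_⟩
    · apply small_compl (lo := 4*k) _ (by omega)
      intro v hv
      by_contra hcon
      push_neg at hcon
      apply hv
      rw [mem_closedNbhd]
      by_cases hv0 : v.val % 4 = 0 ∧ v.val < 4*k-1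
      · exact Or.inl (by simpa using (hmemD v).mpr hv0)
      · by_cases hvt : 4*k-1 ≤ v.val
        · have hveq : v.val = 4*k-1 := by omega
          refine Or.inr ⟨⟨0, by omega⟩, ?_, ?_⟩
          · simpa using (hmemD _).mpr (by simp; omega)
          · rw [bn_adj hk hk1]
            exact ⟨by simp [hveq]; omega, Or.inr (Or.inl ⟨by simp, by simp [hveq]⟩)⟩
        · refine Or.inr ⟨⟨4*(v.val/4), by omega⟩, ?_, ?_⟩
          · simpa using (hmemD _).mpr (by simp; omega)
          · rw [bn_adj hk hk1]
            refine ⟨by simp; omega, Or.inl ⟨by simp; omega, by omega, Or.inl (by simp; omega)⟩⟩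
    · rw [Set.ncard_coe_finset]
      rw [← Finset.card_range k]
      apply Finset.card_bij (fun (a : Fin n) _ => a.val / 4)
      · intro a ha
        rw [hmemD] at ha
        simp only [Finset.mem_range]
        omega
      · intro a ha b hb hab
        rw [hmemD] at ha hb
        exact Fin.ext (by omega)
      · intro b hb
        simp only [Finset.mem_range] at hb
        refine ⟨⟨4*b, by omega⟩, (hmemD _).mpr ?_, ?_⟩ <;> (simp; try omega)

/-- exhibiting a P3 copy -/
lemma contains_p3 {V : Type*} (G : SimpleGraph V) (s : Set V) (x y z : V)
    (hx : x ∈ s) (hy : y ∈ s) (hz : z ∈ s) (hxz : x ≠ z)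
    (h1 : G.Adj y x) (h2 : G.Adj y z) :
    ContainsCopy (SimpleGraph.induce s G) (SimpleGraph.pathGraph 3) := by
  have hxy : x ≠ y := h1.ne'
  have hyz : y ≠ z := h2.ne
  refine ⟨⟨![⟨x, hx⟩, ⟨y, hy⟩, ⟨z, hz⟩], ?_⟩, ?_⟩
  · intro i j hij
    have hval : ∀ m : Fin 3, ((![⟨x, hx⟩, ⟨y, hy⟩, ⟨z, hz⟩] : Fin 3 → s) m).val
        = ![x, y, z] m := by
      intro m; fin_cases m <;> rfl
    have : (![x, y, z] : Fin 3 → V) i = ![x, y, z] j := by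
      rw [← hval i, ← hval j, hij]
    fin_cases i <;> fin_cases j <;> simp_all
  · intro i j hij
    rw [SimpleGraph.pathGraph_adj] at hij
    fin_cases i <;> fin_cases j <;> simp only [Fin.isValue, Fin.val_zero, Fin.val_one,
      Fin.val_two] at hij <;> first
      | omega
      | exact h1.symm
      | exact h1
      | exact h2
      | exact h2.symm

/-- lower bound -/
lemma lb_main {n k : ℕ} (hk : (n+1)/4 = k) (hk1 : 1 ≤ k) (D : Set (Fin n))
    (hiso : IsP3IsolatingSet (Bn n) D) : k ≤ D.ncard := by
  classical
  have hnk : 4*k - 1 ≤ n := by omega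
  set F : Finset (Fin n) := D.toFinset with hF
  have hFm : ∀ v : Fin n, v ∈ F ↔ v ∈ D := by intro v; simp [hF]
  have hncard : D.ncard = F.card := by
    rw [hF, Set.ncard_eq_toFinset_card']
  set W : Finset (Fin n) := F.filter (fun v => v.val ≤ 4*k-2) with hW
  set DN : Finset ℕ := W.image Fin.val with hDN
  have hDNcard : DN.card ≤ W.card := Finset.card_image_le
  have hWcard : W.card ≤ F.card := Finset.card_filter_le _ _
  have hDNle : ∀ x ∈ DN, x ≤ 4*k-2 := by
    intro x hx
    rw [hDN] at hx
    obtain ⟨v, hv, rfl⟩ := Finset.mem_image.mp hx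
    exact (Finset.mem_filter.mp hv).2
  have hDNmem : ∀ v : Fin n, v ∈ D → v.val ≤ 4*k-2 → v.val ∈ DN := by
    intro v hv hle
    exact Finset.mem_image.mpr ⟨v, Finset.mem_filter.mpr ⟨(hFm v).mpr hv, hle⟩, rfl⟩
  have main : ∀ S0 : Bool,
      (∀ d : Fin n, d ∈ D → ¬ (d.val ≤ 4*k-2) → S0 = true) →
      IsoN k DN S0 := by
    intro S0 hS0 a b c hab hbb hcb hac nda ndb ndc ⟨h1, h2⟩
    have hund : ∀ x : ℕ, (hxb : x ≤ 4*k-2) → ¬ domN DN S0 x →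
        (⟨x, by omega⟩ : Fin n) ∈ (closedNbhd (Bn n) D)ᶜ := by
      intro x hxb hnd hmem
      rw [mem_closedNbhd] at hmem
      rcases hmem with hmem | ⟨d, hd, hadj⟩
      · exact hnd (mem_dom (hDNmem _ hmem hxb))
      · have hAdjA := (bn_adj hk hk1 _ _).mp hadj
        obtain ⟨hne, hcl⟩ := hAdjA
        simp only [Fin.val_mk] at hne hcl
        by_cases hdw : d.val ≤ 4*k-2
        · rcases hcl with ⟨_, _, ha⟩ | ha | ha | ha | ha
          · exact hnd (Or.inr (Or.inr ⟨d.val, hDNmem _ hd hdw, ha⟩))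
          all_goals omega
        · have hS : S0 = true := hS0 d hd hdw
          rcases hcl with ⟨hx, _, _⟩ | ha | ha | ha | ha
          · omega
          · omega
          · exact hnd (Or.inl ⟨ha.1, hS⟩)
          · omega
          · omega
    have hA1 : (Bn n).Adj ⟨b, by omega⟩ ⟨a, by omega⟩ := by
      rw [bn_adj hk hk1]
      refine ⟨?_, Or.inl ⟨by simp; omega, by simp; omega, ?_⟩⟩
      · simp only [Fin.val_mk]; unfold adjN at h1; omega
      · simpa using h1
    have hA2 : (Bn n).Adj ⟨b, by omega⟩ ⟨c, by omega⟩ := by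
      rw [bn_adj hk hk1]
      refine ⟨?_, Or.inl ⟨by simp; omega, by simp; omega, ?_⟩⟩
      · simp only [Fin.val_mk]; unfold adjN at h2; omega
      · simpa using h2
    exact hiso (contains_p3 (Bn n) _ ⟨a, by omega⟩ ⟨b, by omega⟩ ⟨c, by omega⟩
      (hund a hab nda) (hund b hbb ndb) (hund c hcb ndc)
      (fun h => hac (congrArg Fin.val h)) hA1 hA2)
  by_cases htail : ∀ v ∈ F, v.val ≤ 4*k-2
  case pos =>
    have hisoN : IsoN k DN false :=
      main false (fun d hd hdw => absurd (htail d ((hFm d).mpr hd)) hdw)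
    have hch := chainLB k DN false hk1 hDNle hisoN (k-1) 0 (by omega)
    have hfe : DN.filter (fun x => 4*0 ≤ x) = DN :=
      Finset.filter_true_of_mem (by intro x _; omega)
    rw [hfe] at hch
    have hcz : credit DN false 0 = 0 := by unfold credit; simp
    omega
  case neg =>
    push_neg at htail
    obtain ⟨vt, hvtF, hvtval⟩ := htail
    have hWlt : W.card < F.card := by
      apply Finset.card_lt_card
      rw [Finset.ssubset_iff_of_subset (Finset.filter_subset _ _)]
      refine ⟨vt, hvtF, ?_⟩
      rw [Finset.mem_filter]
      rintro ⟨-, hc⟩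
      omega
    have hisoN : IsoN k DN true := main true (fun _ _ _ => rfl)
    have hch := chainLB k DN true hk1 hDNle hisoN (k-1) 0 (by omega)
    have hfe : DN.filter (fun x => 4*0 ≤ x) = DN :=
      Finset.filter_true_of_mem (by intro x _; omega)
    rw [hfe] at hch
    have hcu : credit DN true 0 ≤ 1 := credit_le_one _ _ _
    omega

theorem stmt_8 (n : ℕ) (hn : 1 ≤ n) :
    (Bn n).Connected ∧ ¬ HasInducedC6 (Bn n) ∧ iotaP3 (Bn n) = (n + 1) / 4 := by
  refine ⟨bn_connected hn, bn_noC6 hn, ?_⟩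
  set k := (n+1)/4 with hk
  obtain ⟨D, hDiso, hDcard⟩ := ub_witness hk.symm hn
  have hmem : k ∈ {m | ∃ D : Set (Fin n), IsP3IsolatingSet (Bn n) D ∧ D.ncard = m} :=
    ⟨D, hDiso, hDcard⟩
  apply le_antisymm
  · exact Nat.sInf_le hmem
  · apply le_csInf ⟨k, hmem⟩
    rintro m ⟨D', hiso', hcard'⟩
    by_cases hk0 : k = 0
    · omega
    · have := lb_main hk.symm (by omega) D' hiso'
      omega
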